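/- arXiv:1710.08722 — 3 statements merged into one kernel-verified Lean document; each statement's English description precedes it below -/
import Mathlib

section
/- There exists a universal constant C such that for every s ∈ (1/2,1) the following holds. Let γ ⊂ S² be a compact set and Λ > 0 be such that H¹(γ ∩ B_ρ(p)) ≤ Λ ρ for every p ∈ γ and every ρ ∈ (0,1/2). Then for every τ > 1, ∬_{γ×γ} |x̂ − τŷ|^{−3−s} dH¹(x̂) dH¹(ŷ) ≤ C Λ H¹(γ) ∬_{S¹×S¹} |X̂ − τŶ|^{−3−s} dH¹(X̂) dH¹(Ŷ). -/
/-!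
With `δ = τ - 1`, unit vectors satisfy `‖x - τ y‖² = δ² + τ ‖x - y‖²`, so the kernel
`‖x - τ y‖ ^ (-a)`, `a = 3 + s`, is governed by `max δ ‖x - y‖` and both sides are comparable to
`δ ^ (-a) * min δ 1`. On the circle, the arc `‖X - Y‖ ≤ min δ 1` has length `≳ min δ 1` and the
kernel is `≳ δ ^ (-a)` on it. On `γ`, covering `S²` by finitely many small balls gives
`H¹(γ) ≲ Λ`, which extends the density bound to all scales; a dyadic decomposition around `x`
then bounds the inner integral by `≲ Λ δ ^ (1 - a)`, and for `δ ≥ 1` the trivial bound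
`δ ^ (-a) H¹(γ)` suffices.
-/

open MeasureTheory
open scoped ENNReal

noncomputable section

abbrev E3 := EuclideanSpace ℝ (Fin 3)
abbrev E2 := EuclideanSpace ℝ (Fin 2)

open Metric Set

section Sphere

variable {E : Type*} [NormedAddCommGroup E] [InnerProductSpace ℝ E]

theorem norm_sub_smul_sq_of_norm_eq_one {x y : E} (hx : ‖x‖ = 1) (hy : ‖y‖ = 1) (τ : ℝ) :
    ‖x - τ • y‖ ^ 2 = (τ - 1) ^ 2 + τ * ‖x - y‖ ^ 2 := by
  rw [norm_sub_sq_real, norm_sub_sq_real, real_inner_smul_right, norm_smul, mul_pow,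
    Real.norm_eq_abs, sq_abs, hx, hy]
  ring

theorem max_le_norm_sub_smul_of_norm_eq_one {x y : E} (hx : ‖x‖ = 1) (hy : ‖y‖ = 1) {τ : ℝ}
    (hτ : 1 ≤ τ) : max (τ - 1) ‖x - y‖ ≤ ‖x - τ • y‖ := by
  have h := norm_sub_smul_sq_of_norm_eq_one hx hy τ
  refine max_le ?_ ?_ <;>
    nlinarith [norm_nonneg (x - τ • y), norm_nonneg (x - y), sq_nonneg (τ - 1)]

theorem norm_sub_smul_le_of_norm_eq_one {x y : E} (hx : ‖x‖ = 1) (hy : ‖y‖ = 1) {τ : ℝ}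
    (hτ : 1 ≤ τ) (hxy : ‖x - y‖ ≤ min (τ - 1) 1) : ‖x - τ • y‖ ≤ 2 * (τ - 1) := by
  have h := norm_sub_smul_sq_of_norm_eq_one hx hy τ
  have h1 : ‖x - y‖ ≤ τ - 1 := hxy.trans (min_le_left _ _)
  have h2 : ‖x - y‖ ≤ 1 := hxy.trans (min_le_right _ _)
  have h3 : ‖x - y‖ ^ 2 ≤ τ - 1 := by nlinarith [norm_nonneg (x - y)]
  nlinarith [norm_nonneg (x - τ • y), norm_nonneg (x - y)]

end Sphere

section Density

variable {X : Type*} [PseudoMetricSpace X] [MeasurableSpace X]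

/-- Dyadic decomposition: `y` with `2 ^ k δ ≤ max δ (dist x y) < 2 ^ (k + 1) δ` contributes at
most `(2 ^ k δ) ^ (-a)` and lies in `ball x (2 ^ (k + 1) δ)`, whose mass is `≤ 2 ^ (k + 1) Λ δ`. -/
theorem lintegral_max_dist_rpow_neg_le [OpensMeasurableSpace X] {μ : Measure X} {x : X}
    {Λ δ a : ℝ} (hΛ : 0 ≤ Λ) (hδ : 0 < δ) (ha : 2 ≤ a)
    (hball : ∀ r, 0 < r → μ (ball x r) ≤ ENNReal.ofReal (Λ * r)) :
    ∫⁻ y, ENNReal.ofReal (max δ (dist x y) ^ (-a)) ∂μ ≤ ENNReal.ofReal (4 * Λ * δ * δ ^ (-a)) := by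
  set q : ℝ := 2 ^ (-a)
  have hq0 : 0 ≤ q := by positivity
  have hq : 2 * q ≤ 2⁻¹ := by
    have : q ≤ 2 ^ (-2 : ℝ) := Real.rpow_le_rpow_of_exponent_le one_le_two (by linarith)
    norm_num at this; linarith
  set f : ℕ → X → ℝ≥0∞ := fun k =>
    (ball x (2 ^ (k + 1) * δ)).indicator fun _ => ENNReal.ofReal (q ^ k * δ ^ (-a))
  have hpow : ∀ k : ℕ, ((2 : ℝ) ^ k * δ) ^ (-a) = q ^ k * δ ^ (-a) := fun k => by
    rw [Real.mul_rpow (by positivity) hδ.le, ← Real.rpow_pow_comm zero_le_two]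
  have hpt : ∀ y, ENNReal.ofReal (max δ (dist x y) ^ (-a)) ≤ ∑' k, f k y := fun y => by
    obtain ⟨k, hk, hk'⟩ := exists_nat_pow_near (one_le_div hδ |>.2 (le_max_left δ (dist x y)))
      one_lt_two
    rw [le_div_iff₀ hδ] at hk
    rw [div_lt_iff₀ hδ] at hk'
    have hy : y ∈ ball x (2 ^ (k + 1) * δ) := by
      rw [mem_ball, dist_comm]; exact (le_max_right _ _).trans_lt hk'
    refine le_trans ?_ (ENNReal.le_tsum k)
    simp only [f, indicator_of_mem hy, ← hpow]
    exact ENNReal.ofReal_le_ofReal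
      (Real.rpow_le_rpow_of_nonpos (by positivity) hk (by linarith))
  have hterm : ∀ k : ℕ, ∫⁻ y, f k y ∂μ ≤ ENNReal.ofReal (2 * Λ * δ * δ ^ (-a)) * 2⁻¹ ^ k :=
    fun k => by
      rw [lintegral_indicator_const measurableSet_ball]
      calc ENNReal.ofReal (q ^ k * δ ^ (-a)) * μ (ball x (2 ^ (k + 1) * δ))
          ≤ ENNReal.ofReal (q ^ k * δ ^ (-a)) * ENNReal.ofReal (Λ * (2 ^ (k + 1) * δ)) :=
            mul_le_mul_right (hball _ (by positivity)) _
        _ = ENNReal.ofReal (2 * Λ * δ * δ ^ (-a) * (2 * q) ^ k) := by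
            rw [← ENNReal.ofReal_mul (by positivity)]; ring_nf
        _ ≤ ENNReal.ofReal (2 * Λ * δ * δ ^ (-a) * 2⁻¹ ^ k) :=
            ENNReal.ofReal_le_ofReal (by gcongr)
        _ = ENNReal.ofReal (2 * Λ * δ * δ ^ (-a)) * 2⁻¹ ^ k := by
            rw [ENNReal.ofReal_mul (by positivity), ENNReal.ofReal_pow (by norm_num),
              ENNReal.ofReal_inv_of_pos two_pos, ENNReal.ofReal_ofNat]
  calc ∫⁻ y, ENNReal.ofReal (max δ (dist x y) ^ (-a)) ∂μ
      ≤ ∫⁻ y, ∑' k, f k y ∂μ := lintegral_mono hpt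
    _ = ∑' k, ∫⁻ y, f k y ∂μ :=
        lintegral_tsum fun k => (measurable_const.indicator measurableSet_ball).aemeasurable
    _ ≤ ∑' k : ℕ, ENNReal.ofReal (2 * Λ * δ * δ ^ (-a)) * 2⁻¹ ^ k := ENNReal.tsum_le_tsum hterm
    _ = ENNReal.ofReal (4 * Λ * δ * δ ^ (-a)) := by
        rw [ENNReal.tsum_mul_left, ENNReal.tsum_geometric_two, ← ENNReal.ofReal_ofNat 2,
          ← ENNReal.ofReal_mul (by positivity)]
        ring_nf

theorem measure_inter_ball_le_of_forall_lt {μ : Measure X} {γ : Set X} {x : X} {Λ M R r : ℝ}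
    (hΛ : 0 ≤ Λ) (hM : 0 ≤ M) (hR : 0 < R) (hγ : μ γ ≤ ENNReal.ofReal M)
    (hsmall : ∀ ρ ∈ Ioo 0 R, μ (γ ∩ ball x ρ) ≤ ENNReal.ofReal (Λ * ρ)) (hr : 0 < r) :
    μ (γ ∩ ball x r) ≤ ENNReal.ofReal ((Λ + M / R) * r) := by
  rcases lt_or_ge r R with hrR | hRr
  · refine (hsmall r ⟨hr, hrR⟩).trans (ENNReal.ofReal_le_ofReal ?_)
    have : 0 ≤ M / R * r := by positivity
    nlinarith
  · refine (measure_mono inter_subset_left).trans (hγ.trans (ENNReal.ofReal_le_ofReal ?_))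
    have : M ≤ M / R * r := by rw [div_mul_eq_mul_div, le_div_iff₀ hR]; nlinarith
    nlinarith

/-- Each ball of the cover that meets `γ` lies in a ball of twice the radius centred on `γ`. -/
theorem measure_le_card_mul_of_subset_biUnion_ball {μ : Measure X} {γ : Set X} {t : Finset X}
    {Λ r : ℝ} (hcover : γ ⊆ ⋃ q ∈ t, ball q r)
    (hdens : ∀ p ∈ γ, μ (γ ∩ ball p (2 * r)) ≤ ENNReal.ofReal (Λ * (2 * r))) :
    μ γ ≤ t.card * ENNReal.ofReal (Λ * (2 * r)) := by
  have hpiece : ∀ q ∈ t, μ (γ ∩ ball q r) ≤ ENNReal.ofReal (Λ * (2 * r)) := by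
    intro q _
    rcases (γ ∩ ball q r).eq_empty_or_nonempty with he | ⟨p, hpγ, hpq⟩
    · simp [he]
    have hsub : γ ∩ ball q r ⊆ γ ∩ ball p (2 * r) := fun y ⟨hyγ, hyq⟩ => by
      refine ⟨hyγ, ?_⟩
      rw [mem_ball] at hyq hpq ⊢
      linarith [dist_triangle_right y p q]
    exact (measure_mono hsub).trans (hdens p hpγ)
  calc μ γ ≤ μ (⋃ q ∈ t, γ ∩ ball q r) := measure_mono fun y hy => by
        obtain ⟨q, hq, hyq⟩ := mem_iUnion₂.1 (hcover hy)
        exact mem_iUnion₂.2 ⟨q, hq, hy, hyq⟩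
    _ ≤ ∑ q ∈ t, μ (γ ∩ ball q r) := measure_biUnion_finset_le t _
    _ ≤ ∑ _q ∈ t, ENNReal.ofReal (Λ * (2 * r)) := Finset.sum_le_sum hpiece
    _ = t.card * ENNReal.ofReal (Λ * (2 * r)) := by rw [Finset.sum_const, nsmul_eq_mul]

end Density

section Cap

variable {E : Type*} [NormedAddCommGroup E] [InnerProductSpace ℝ E]

theorem exists_norm_eq_one_inner_eq_zero [FiniteDimensional ℝ E]
    (hE : 2 ≤ Module.finrank ℝ E) (x : E) : ∃ v : E, ‖v‖ = 1 ∧ inner ℝ x v = 0 := by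
  have hspan : (ℝ ∙ x) ≠ ⊤ := fun h => by
    have := finrank_span_le_card (R := ℝ) ({x} : Set E)
    rw [h, finrank_top] at this
    simp at this; omega
  obtain ⟨w, hw, hw0⟩ :=
    Submodule.exists_mem_ne_zero_of_ne_bot (Submodule.orthogonal_eq_bot_iff.not.2 hspan)
  refine ⟨‖w‖⁻¹ • w, norm_smul_inv_norm hw0, ?_⟩
  rw [inner_smul_right, Submodule.mem_orthogonal_singleton_iff_inner_right.1 hw, mul_zero]

variable [MeasurableSpace E] [BorelSpace E]

/-- The cap is parametrised by `t ↦ √(1 - t²) x + t v` over `t ∈ [0, r/2]`, and projecting onto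
`v`, which is `1`-Lipschitz, maps it onto that interval. -/
theorem le_hausdorffMeasure_sphere_inter_closedBall [FiniteDimensional ℝ E]
    (hE : 2 ≤ Module.finrank ℝ E) {x : E} (hx : ‖x‖ = 1) {r : ℝ} (hr : r ≤ 2) :
    ENNReal.ofReal (r / 2) ≤ μH[1] (sphere (0 : E) 1 ∩ closedBall x r) := by
  obtain ⟨v, hv, hxv⟩ := exists_norm_eq_one_inner_eq_zero hE x
  have hproj : LipschitzWith 1 fun y : E => inner ℝ v y := by
    have h1 : ‖innerSL ℝ v‖₊ = 1 := by ext; simp [innerSL_apply_norm, hv]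
    simpa [h1] using (innerSL ℝ v).lipschitz
  have himage : Icc 0 (r / 2) ⊆ (fun y : E => inner ℝ v y) '' (sphere 0 1 ∩ closedBall x r) := by
    rintro t ⟨ht0, htr⟩
    set c := √(1 - t ^ 2)
    have hc0 : 0 ≤ c := Real.sqrt_nonneg _
    have hc : c ^ 2 = 1 - t ^ 2 := Real.sq_sqrt (by nlinarith)
    have hnorm : ∀ α : ℝ, ‖α • x + t • v‖ ^ 2 = α ^ 2 + t ^ 2 := fun α => by
      rw [norm_add_sq_real, inner_smul_left, inner_smul_right, hxv, norm_smul, norm_smul, hx, hv,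
        Real.norm_eq_abs, Real.norm_eq_abs, mul_pow, mul_pow, sq_abs, sq_abs]
      simp
    refine ⟨c • x + t • v, ⟨?_, ?_⟩, ?_⟩
    · rw [mem_sphere_zero_iff_norm, ← sq_eq_sq₀ (norm_nonneg _) zero_le_one, hnorm, hc]
      ring
    · have hxy : c • x + t • v - x = (c - 1) • x + t • v := by rw [sub_smul, one_smul]; abel
      rw [mem_closedBall, dist_eq_norm, hxy, ← sq_le_sq₀ (norm_nonneg _) (by linarith), hnorm]
      nlinarith
    · simp [inner_add_right, inner_smul_right, real_inner_comm x v, hxv, hv]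
  calc ENNReal.ofReal (r / 2) = μH[1] (Icc 0 (r / 2)) := by
        rw [hausdorffMeasure_real, Real.volume_Icc, sub_zero]
    _ ≤ μH[1] ((fun y : E => inner ℝ v y) '' (sphere 0 1 ∩ closedBall x r)) := measure_mono himage
    _ ≤ μH[1] (sphere (0 : E) 1 ∩ closedBall x r) := by
        simpa using hproj.hausdorffMeasure_image_le zero_le_one (sphere (0 : E) 1 ∩ closedBall x r)

end Cap

def kernelScale (a δ : ℝ) : ℝ := δ ^ (-a) * min δ 1

section Kernel

variable {E : Type*} [NormedAddCommGroup E] [InnerProductSpace ℝ E] [MeasurableSpace E]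
  [BorelSpace E]

theorem one_le_hausdorffMeasure_sphere [FiniteDimensional ℝ E] (hE : 2 ≤ Module.finrank ℝ E) :
    1 ≤ μH[1] (sphere (0 : E) 1) := by
  have : Nontrivial E := Module.nontrivial_of_finrank_pos (by omega : 0 < Module.finrank ℝ E)
  obtain ⟨x, hx⟩ := exists_norm_eq E zero_le_one
  calc (1 : ℝ≥0∞) = ENNReal.ofReal (2 / 2) := by norm_num
    _ ≤ μH[1] (sphere (0 : E) 1 ∩ closedBall x 2) :=
        le_hausdorffMeasure_sphere_inter_closedBall hE hx le_rfl
    _ ≤ μH[1] (sphere (0 : E) 1) := measure_mono inter_subset_left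

/-- On the cap `‖x - y‖ ≤ min δ 1` the kernel is at least `(2δ) ^ (-a)`. -/
theorem le_setLIntegral_sphere_rpow_norm_sub_smul [FiniteDimensional ℝ E]
    (hE : 2 ≤ Module.finrank ℝ E) {x : E} (hx : ‖x‖ = 1) {a τ : ℝ} (ha₀ : 0 ≤ a) (ha₄ : a ≤ 4)
    (hτ : 1 < τ) :
    ENNReal.ofReal (kernelScale a (τ - 1) / 32)
      ≤ ∫⁻ y in sphere (0 : E) 1, ENNReal.ofReal (‖x - τ • y‖ ^ (-a)) ∂μH[1] := by
  set δ := τ - 1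
  have hδ : 0 < δ := sub_pos.2 hτ
  set cap := sphere (0 : E) 1 ∩ closedBall x (min δ 1)
  have hkernel : ∀ y ∈ cap,
      ENNReal.ofReal (δ ^ (-a) / 16) ≤ ENNReal.ofReal (‖x - τ • y‖ ^ (-a)) := by
    rintro y ⟨hy, hyx⟩
    rw [mem_sphere_zero_iff_norm] at hy
    rw [mem_closedBall, dist_eq_norm, norm_sub_rev] at hyx
    have hlow := (le_max_left _ _).trans (max_le_norm_sub_smul_of_norm_eq_one hx hy hτ.le)
    have hup := norm_sub_smul_le_of_norm_eq_one hx hy hτ.le hyx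
    refine ENNReal.ofReal_le_ofReal ?_
    calc δ ^ (-a) / 16 = 2 ^ (-4 : ℝ) * δ ^ (-a) := by norm_num; ring
      _ ≤ 2 ^ (-a) * δ ^ (-a) := by gcongr; exact one_le_two
      _ = (2 * δ) ^ (-a) := (Real.mul_rpow zero_le_two hδ.le).symm
      _ ≤ ‖x - τ • y‖ ^ (-a) := Real.rpow_le_rpow_of_nonpos (hδ.trans_le hlow) hup (by linarith)
  calc ENNReal.ofReal (kernelScale a δ / 32)
      = ENNReal.ofReal (δ ^ (-a) / 16) * ENNReal.ofReal (min δ 1 / 2) := by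
        rw [← ENNReal.ofReal_mul (by positivity), kernelScale]; ring_nf
    _ ≤ ENNReal.ofReal (δ ^ (-a) / 16) * μH[1] cap :=
        mul_le_mul_right (le_hausdorffMeasure_sphere_inter_closedBall hE hx
          ((min_le_right _ _).trans one_le_two)) _
    _ = ∫⁻ _ in cap, ENNReal.ofReal (δ ^ (-a) / 16) ∂μH[1] := (setLIntegral_const _ _).symm
    _ ≤ ∫⁻ y in cap, ENNReal.ofReal (‖x - τ • y‖ ^ (-a)) ∂μH[1] :=
        setLIntegral_mono' (isClosed_sphere.inter isClosed_closedBall).measurableSet hkernel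
    _ ≤ ∫⁻ y in sphere (0 : E) 1, ENNReal.ofReal (‖x - τ • y‖ ^ (-a)) ∂μH[1] :=
        lintegral_mono' (Measure.restrict_mono inter_subset_left le_rfl) le_rfl

theorem le_setLIntegral_sphere_setLIntegral_sphere_rpow_norm_sub_smul [FiniteDimensional ℝ E]
    (hE : 2 ≤ Module.finrank ℝ E) {a τ : ℝ} (ha₀ : 0 ≤ a) (ha₄ : a ≤ 4) (hτ : 1 < τ) :
    ENNReal.ofReal (kernelScale a (τ - 1) / 32)
      ≤ ∫⁻ x in sphere (0 : E) 1, ∫⁻ y in sphere (0 : E) 1,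
          ENNReal.ofReal (‖x - τ • y‖ ^ (-a)) ∂μH[1] ∂μH[1] :=
  calc ENNReal.ofReal (kernelScale a (τ - 1) / 32)
      ≤ ENNReal.ofReal (kernelScale a (τ - 1) / 32) * μH[1] (sphere (0 : E) 1) :=
        le_mul_of_one_le_right' (one_le_hausdorffMeasure_sphere hE)
    _ = ∫⁻ _ in sphere (0 : E) 1, ENNReal.ofReal (kernelScale a (τ - 1) / 32) ∂μH[1] :=
        (setLIntegral_const _ _).symm
    _ ≤ _ := setLIntegral_mono' isClosed_sphere.measurableSet fun _ hx =>
        le_setLIntegral_sphere_rpow_norm_sub_smul hE (mem_sphere_zero_iff_norm.1 hx) ha₀ ha₄ hτ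

theorem setLIntegral_rpow_norm_sub_smul_le {γ : Set E} (hγ : MeasurableSet γ)
    (hγs : γ ⊆ sphere 0 1) {x : E} (hx : x ∈ γ) {a τ Λ M : ℝ} (ha : 2 ≤ a) (hτ : 1 < τ)
    (hΛ : 0 ≤ Λ) (hM : 0 ≤ M) (hγM : μH[1] γ ≤ ENNReal.ofReal M)
    (hball : ∀ r, 0 < r → μH[1] (γ ∩ ball x r) ≤ ENNReal.ofReal (Λ * r)) :
    ∫⁻ y in γ, ENNReal.ofReal (‖x - τ • y‖ ^ (-a)) ∂μH[1]
      ≤ ENNReal.ofReal ((4 * Λ + M) * kernelScale a (τ - 1)) := by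
  set δ := τ - 1
  have hδ : 0 < δ := sub_pos.2 hτ
  have hkernel : ∀ y ∈ γ, ENNReal.ofReal (‖x - τ • y‖ ^ (-a))
      ≤ ENNReal.ofReal (max δ (dist x y) ^ (-a)) := fun y hy => by
    have hle := max_le_norm_sub_smul_of_norm_eq_one (mem_sphere_zero_iff_norm.1 (hγs hx))
      (mem_sphere_zero_iff_norm.1 (hγs hy)) hτ.le
    rw [← dist_eq_norm] at hle
    exact ENNReal.ofReal_le_ofReal (Real.rpow_le_rpow_of_nonpos
      (hδ.trans_le (le_max_left _ _)) hle (by linarith))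
  refine (setLIntegral_mono' hγ hkernel).trans ?_
  rcases le_total δ 1 with hδ1 | hδ1
  · have hball' : ∀ r, 0 < r → μH[1].restrict γ (ball x r) ≤ ENNReal.ofReal (Λ * r) :=
      fun r hr => by rw [Measure.restrict_apply measurableSet_ball, inter_comm]; exact hball r hr
    refine (lintegral_max_dist_rpow_neg_le hΛ hδ ha hball').trans (ENNReal.ofReal_le_ofReal ?_)
    rw [kernelScale, min_eq_left hδ1]
    have : 0 ≤ M * (δ ^ (-a) * δ) := by positivity
    nlinarith
  · calc ∫⁻ y in γ, ENNReal.ofReal (max δ (dist x y) ^ (-a)) ∂μH[1]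
        ≤ ∫⁻ _ in γ, ENNReal.ofReal (δ ^ (-a)) ∂μH[1] := setLIntegral_mono' hγ fun y _ =>
          ENNReal.ofReal_le_ofReal (Real.rpow_le_rpow_of_nonpos hδ (le_max_left _ _)
            (by linarith))
      _ ≤ ENNReal.ofReal (δ ^ (-a)) * ENNReal.ofReal M := by
          rw [setLIntegral_const]; exact mul_le_mul_right hγM _
      _ ≤ ENNReal.ofReal ((4 * Λ + M) * kernelScale a δ) := by
          rw [← ENNReal.ofReal_mul (by positivity), kernelScale, min_eq_right hδ1]
          refine ENNReal.ofReal_le_ofReal ?_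
          have : 0 ≤ Λ * δ ^ (-a) := by positivity
          nlinarith

end Kernel

/-- there is a universal `C` such that for every `s ∈ (1/2,1)`, every compact
`γ ⊆ S²` satisfying the upper density bound `H¹(γ ∩ B_ρ(p)) ≤ Λρ` for `p ∈ γ`, `ρ ∈ (0,1/2)`,
and every `τ > 1`,
`∬_{γ×γ} |x̂−τŷ|^{−3−s} ≤ C Λ H¹(γ) ∬_{S¹×S¹} |X̂−τŶ|^{−3−s}`. -/
theorem kernel_double_integral_comparison :
    ∃ C : ℝ, 0 < C ∧ ∀ s ∈ Set.Ioo (1/2 : ℝ) 1,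
      ∀ γ : Set E3, IsCompact γ → γ ⊆ Metric.sphere (0:E3) 1 →
      ∀ Λ : ℝ, 0 < Λ →
      (∀ p ∈ γ, ∀ ρ ∈ Set.Ioo (0:ℝ) (1/2),
        μH[1] (γ ∩ Metric.ball p ρ) ≤ ENNReal.ofReal (Λ * ρ)) →
      ∀ τ : ℝ, 1 < τ →
        (∫⁻ x in γ, ∫⁻ y in γ,
            ENNReal.ofReal (‖x - τ • y‖ ^ (-(3:ℝ) - s)) ∂μH[1] ∂μH[1])
          ≤ ENNReal.ofReal (C * Λ) * μH[1] γ *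
            ∫⁻ X in Metric.sphere (0:E2) 1, ∫⁻ Y in Metric.sphere (0:E2) 1,
              ENNReal.ofReal (‖X - τ • Y‖ ^ (-(3:ℝ) - s)) ∂μH[1] ∂μH[1] := by
  obtain ⟨t, ht⟩ := (isCompact_sphere (0 : E3) 1).elim_finite_subcover (fun p => ball p (1 / 8))
    (fun _ => isOpen_ball) fun x _ => mem_iUnion.2 ⟨x, mem_ball_self (by norm_num)⟩
  set c : ℝ := t.card / 4
  refine ⟨32 * (4 + 9 * c), by positivity, fun s ⟨hs, hs'⟩ γ hγ hγs Λ hΛ hdens τ hτ => ?_⟩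
  have hmass : μH[1] γ ≤ ENNReal.ofReal (c * Λ) := by
    refine (measure_le_card_mul_of_subset_biUnion_ball (hγs.trans ht) fun p hp =>
      hdens p hp _ ⟨by norm_num, by norm_num⟩).trans_eq ?_
    rw [← ENNReal.ofReal_natCast, ← ENNReal.ofReal_mul (by positivity)]
    congr 1
    ring
  have hball : ∀ x ∈ γ, ∀ r, 0 < r →
      μH[1] (γ ∩ ball x r) ≤ ENNReal.ofReal ((Λ + c * Λ / (1 / 2)) * r) := fun x hx r hr =>
    measure_inter_ball_le_of_forall_lt hΛ.le (by positivity) (by norm_num) hmass (hdens x hx) hr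
  have hE2 : 2 ≤ Module.finrank ℝ E2 := (finrank_euclideanSpace_fin).ge
  rw [show -(3 : ℝ) - s = -(3 + s) by ring]
  calc ∫⁻ x in γ, ∫⁻ y in γ, ENNReal.ofReal (‖x - τ • y‖ ^ (-(3 + s))) ∂μH[1] ∂μH[1]
      ≤ ∫⁻ _ in γ, ENNReal.ofReal ((4 * (Λ + c * Λ / (1 / 2)) + c * Λ) *
          kernelScale (3 + s) (τ - 1)) ∂μH[1] :=
        setLIntegral_mono' hγ.measurableSet fun x hx =>
          setLIntegral_rpow_norm_sub_smul_le hγ.measurableSet hγs hx (by linarith) hτ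
            (by positivity) (by positivity) hmass (hball x hx)
    _ = ENNReal.ofReal (32 * (4 + 9 * c) * Λ) * μH[1] γ *
          ENNReal.ofReal (kernelScale (3 + s) (τ - 1) / 32) := by
        rw [setLIntegral_const, mul_right_comm, ← ENNReal.ofReal_mul (by positivity)]
        ring_nf
    _ ≤ _ := mul_le_mul_right (le_setLIntegral_sphere_setLIntegral_sphere_rpow_norm_sub_smul hE2
          (by linarith) (by linarith) hτ) _
end
end

section
/- There exists a universal constant c > 0 such that for every s ∈ (1/2,1) and all x̂, ŷ ∈ S² with x̂ ≠ ŷ, one has k_s(x̂,ŷ) ≥ c |x̂ − ŷ|^{−2−s}. -/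
/-!
On the unit sphere `t² + 1 − 2t x̂·ŷ = (t − 1)² + t d²` with `d = |x̂ − ŷ| ≤ 2`, so on the window
`t ∈ (1, 1 + d]` the base is at most `4d²` and the integrand is at least `(4d²)^{−(3+s)/2}`.
Integrating over this window of length `d` gives `4^{−(3+s)/2} d^{−2−s} ≥ d^{−2−s}/16`.
-/

open MeasureTheory
open scoped ENNReal RealInnerProductSpace

noncomputable section

/-- The kernel `k_s(x̂,ŷ) = ∫_0^∞ t (t² + 1 − 2t x̂·ŷ)^{−(3+s)/2} dt ∈ [0,∞]`. -/
def kernelK (s : ℝ) (x y : E3) : ℝ≥0∞ :=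
  ∫⁻ t in Set.Ioi (0:ℝ), ENNReal.ofReal (t * (t ^ 2 + 1 - 2 * t * ⟪x, y⟫) ^ (-(3 + s)/2))

open Set

lemma norm_sub_le_two {E : Type*} [SeminormedAddGroup E] {x y : E} (hx : ‖x‖ = 1)
    (hy : ‖y‖ = 1) : ‖x - y‖ ≤ 2 :=
  (norm_sub_le x y).trans (by rw [hx, hy]; norm_num)

section UnitVectors

variable {F : Type*} [NormedAddCommGroup F] [InnerProductSpace ℝ F] {x y : F}

lemma inner_eq_one_sub_norm_sub_sq_div_two (hx : ‖x‖ = 1) (hy : ‖y‖ = 1) :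
    ⟪x, y⟫ = 1 - ‖x - y‖ ^ 2 / 2 := by
  have h := norm_sub_sq_real x y
  rw [hx, hy] at h
  linarith

lemma sq_add_one_sub_two_mul_inner (hx : ‖x‖ = 1) (hy : ‖y‖ = 1) (t : ℝ) :
    t ^ 2 + 1 - 2 * t * ⟪x, y⟫ = (t - 1) ^ 2 + t * ‖x - y‖ ^ 2 := by
  rw [inner_eq_one_sub_norm_sub_sq_div_two hx hy]
  ring

end UnitVectors

lemma four_mul_sq_rpow_le_mul_rpow {d t a : ℝ} (hd2 : d ≤ 2)
    (ht : t ∈ Ioc 1 (1 + d)) (ha : a ≤ 0) :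
    (4 * d ^ 2) ^ a ≤ t * ((t - 1) ^ 2 + t * d ^ 2) ^ a := by
  obtain ⟨ht1, ht2⟩ := ht
  have hbase_pos : 0 < (t - 1) ^ 2 + t * d ^ 2 := by positivity
  have hbase_le : (t - 1) ^ 2 + t * d ^ 2 ≤ 4 * d ^ 2 := by nlinarith
  calc (4 * d ^ 2) ^ a ≤ ((t - 1) ^ 2 + t * d ^ 2) ^ a :=
        Real.rpow_le_rpow_of_nonpos hbase_pos hbase_le ha
    _ ≤ t * ((t - 1) ^ 2 + t * d ^ 2) ^ a :=
        le_mul_of_one_le_left (Real.rpow_nonneg hbase_pos.le _) ht1.le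

lemma four_mul_sq_rpow_mul_self {d : ℝ} (hd : 0 < d) (s : ℝ) :
    (4 * d ^ 2) ^ (-(3 + s) / 2) * d = 4 ^ (-(3 + s) / 2) * d ^ (-2 - s) := by
  have hsq : (d ^ 2) ^ (-(3 + s) / 2) = d ^ (-(3 + s)) := by
    rw [← Real.rpow_natCast d 2, ← Real.rpow_mul hd.le]
    ring_nf
  rw [Real.mul_rpow (by norm_num) (by positivity), hsq, mul_assoc,
    ← Real.rpow_add_one hd.ne']
  ring_nf

lemma one_div_sixteen_le_four_rpow {s : ℝ} (hs : s ≤ 1) :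
    1 / 16 ≤ (4 : ℝ) ^ (-(3 + s) / 2) := by
  calc (1 / 16 : ℝ) = 4 ^ (-2 : ℝ) := by norm_num
    _ ≤ 4 ^ (-(3 + s) / 2) := Real.rpow_le_rpow_of_exponent_le (by norm_num) (by linarith)

lemma ofReal_mul_sub_le_setLIntegral {f : ℝ → ℝ} {s : Set ℝ} {m a b : ℝ} (hm : 0 ≤ m)
    (hs : Ioc a b ⊆ s) (hf : ∀ t ∈ Ioc a b, m ≤ f t) :
    ENNReal.ofReal (m * (b - a)) ≤ ∫⁻ t in s, ENNReal.ofReal (f t) :=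
  calc ENNReal.ofReal (m * (b - a)) = ∫⁻ _ in Ioc a b, ENNReal.ofReal m := by
        rw [setLIntegral_const, Real.volume_Ioc, ENNReal.ofReal_mul hm]
    _ ≤ ∫⁻ t in Ioc a b, ENNReal.ofReal (f t) :=
        setLIntegral_mono' measurableSet_Ioc fun t ht => ENNReal.ofReal_le_ofReal (hf t ht)
    _ ≤ ∫⁻ t in s, ENNReal.ofReal (f t) := lintegral_mono_set hs

/-- there is a universal constant `c > 0` such that for all `s ∈ (1/2,1)`
and all distinct `x̂, ŷ ∈ S²`, `k_s(x̂,ŷ) ≥ c |x̂ − ŷ|^{−2−s}`. -/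
theorem kernelK_lower_bound :
    ∃ c : ℝ, 0 < c ∧ ∀ s ∈ Set.Ioo (1/2 : ℝ) 1,
      ∀ x ∈ Metric.sphere (0:E3) 1, ∀ y ∈ Metric.sphere (0:E3) 1, x ≠ y →
        ENNReal.ofReal (c * ‖x - y‖ ^ (-(2:ℝ) - s)) ≤ kernelK s x y := by
  refine ⟨1 / 16, by norm_num, ?_⟩
  rintro s ⟨hs1, hs2⟩ x hx y hy hxy
  rw [mem_sphere_zero_iff_norm] at hx hy
  have hd : 0 < ‖x - y‖ := norm_pos_iff.mpr (sub_ne_zero_of_ne hxy)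
  calc ENNReal.ofReal (1 / 16 * ‖x - y‖ ^ (-(2:ℝ) - s))
      ≤ ENNReal.ofReal ((4 * ‖x - y‖ ^ 2) ^ (-(3 + s) / 2) * (1 + ‖x - y‖ - 1)) := by
        rw [add_sub_cancel_left, four_mul_sq_rpow_mul_self hd]
        gcongr
        exact one_div_sixteen_le_four_rpow hs2.le
    _ ≤ kernelK s x y := by
        refine ofReal_mul_sub_le_setLIntegral (by positivity) (Ioc_subset_Ioi_self.trans
          (Ioi_subset_Ioi zero_le_one)) fun t ht => ?_
        rw [sq_add_one_sub_two_mul_inner hx hy]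
        exact four_mul_sq_rpow_le_mul_rpow (norm_sub_le_two hx hy) ht (by linarith)
end
end

section
/- Let b ∈ (0, 1/100). Let z : [0,4π] → (−1,1) be a C¹ function with |z(0)| ≤ b/2 and |z'(θ)| ≤ b/(8π) for all θ ∈ [0,4π], and define ω : [0,4π] → ℝ³ by ω(θ) := (cos θ, sin θ, z(θ)). Assume ω is injective on [0,4π] and z(0) < z(4π). Let t₁ < t₂ and let θ̃, z̃ : [t₁,t₂] → ℝ be C¹ functions with z̃ taking values in (−1,1); define ω̃(t) := (cos θ̃(t), sin θ̃(t), z̃(t)), and assume |ω̃'(t)| = 1 for all t (arc-length parametrization), ω̃(t₁) = ω(4π), ω̃(t₂) = ω(0), and that ω̃((t₁,t₂)) is disjoint from ω((0,4π)). Then: (i) for each θ₀ ∈ (0,2π) there exists t ∈ (t₁,t₂) such that θ̃(t) − θ₀ ∈ 2πℤ, −b ≤ z(θ₀) ≤ z̃(t) ≤ z(θ₀+2π) ≤ b, and θ̃'(t) ≤ 0; (ii) the set A := {t ∈ (t₁,t₂) : |z̃(t)| ≤ b and θ̃'(t) ≤ 0} has one-dimensional Lebesgue measure at least 2π. -/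
/-!
Lift to the universal cover of the cylinder, with the angle as first coordinate. Injectivity of `ω`
and `z 0 < z (4π)` force `z s < z (s + 2π)` on `[0, 2π]`, so the lifted loop consists of stacked
strands. For `θ₀ ∈ (0, 2π)`, the points lying (modulo `2π`) above the strand over `(θ₀, 4π)`, and
those lying below the strand over `(0, θ₀ + 2π)`, form disjoint open regions `U` and `V`; off the
loop, what remains is the cut `{θ₀} × (z θ₀, z (θ₀ + 2π))`. The curve `ω̃` starts in `U` and ends
in `V`, so at its last exit time from `U` it lies on the cut, and there `θ̃' ≤ 0`: moving forward
across the cut leads back into `U`. Finally `θ̃` is `1`-Lipschitz and reaches every angle of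
`(0, 2π)` modulo `2π` at a time of `A`, so `A` has measure at least `2π`.
-/

open Set Filter Topology MeasureTheory AddCommGroup

section PeriodicGraph

variable {c : ℝ} {f : ℝ → ℝ} {I : Set ℝ}

def periodicAbove (c : ℝ) (f : ℝ → ℝ) (I : Set ℝ) : Set (ℝ × ℝ) :=
  {p | ∃ s, s ≡ p.1 [PMOD c] ∧ s ∈ I ∧ f s < p.2}

def periodicBelow (c : ℝ) (f : ℝ → ℝ) (I : Set ℝ) : Set (ℝ × ℝ) :=
  {p | ∃ s, s ≡ p.1 [PMOD c] ∧ s ∈ I ∧ p.2 < f s}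

lemma isOpen_setOf_exists_modEq {W : Set (ℝ × ℝ)} (hW : IsOpen W) :
    IsOpen {p : ℝ × ℝ | ∃ s, s ≡ p.1 [PMOD c] ∧ (s, p.2) ∈ W} := by
  have : {p : ℝ × ℝ | ∃ s, s ≡ p.1 [PMOD c] ∧ (s, p.2) ∈ W} =
      ⋃ m : ℤ, (fun p : ℝ × ℝ => (p.1 - m • c, p.2)) ⁻¹' W := by
    ext p
    simp only [mem_ofPred_eq, mem_iUnion, mem_preimage, modEq_iff_eq_add_zsmul]
    constructor
    · rintro ⟨s, ⟨m, hm⟩, hs⟩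
      exact ⟨m, by rwa [hm, add_sub_cancel_right]⟩
    · rintro ⟨m, hm⟩
      exact ⟨_, ⟨m, (sub_add_cancel _ _).symm⟩, hm⟩
  rw [this]
  exact isOpen_iUnion fun m => hW.preimage (by fun_prop)

lemma isOpen_periodicAbove (hI : IsOpen I) (hf : ContinuousOn f I) :
    IsOpen (periodicAbove c f I) := by
  refine isOpen_setOf_exists_modEq (W := {q | q.1 ∈ I ∧ f q.1 < q.2}) ?_
  refine isOpen_iff_mem_nhds.2 fun q ⟨hq, hlt⟩ => ?_
  have hfq : ContinuousAt (fun q : ℝ × ℝ => f q.1) q :=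
    (hf.continuousAt (hI.mem_nhds hq)).comp continuous_fst.continuousAt
  exact (continuous_fst.continuousAt.eventually (hI.mem_nhds hq)).and
    (hfq.eventually_lt continuous_snd.continuousAt hlt)

lemma isOpen_periodicBelow (hI : IsOpen I) (hf : ContinuousOn f I) :
    IsOpen (periodicBelow c f I) := by
  refine isOpen_setOf_exists_modEq (W := {q | q.1 ∈ I ∧ q.2 < f q.1}) ?_
  refine isOpen_iff_mem_nhds.2 fun q ⟨hq, hlt⟩ => ?_
  have hfq : ContinuousAt (fun q : ℝ × ℝ => f q.1) q :=
    (hf.continuousAt (hI.mem_nhds hq)).comp continuous_fst.continuousAt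
  exact (continuous_fst.continuousAt.eventually (hI.mem_nhds hq)).and
    (continuous_snd.continuousAt.eventually_lt hfq hlt)

lemma AddCommGroup.ModEq.eq_or_eq_add_of_sub_lt_of_lt (hc : 0 < c) {a b : ℝ} (h : a ≡ b [PMOD c])
    (hlo : a - c < b) (hhi : b < a + 2 * c) : b = a ∨ b = a + c := by
  obtain ⟨m, rfl⟩ := modEq_iff_eq_add_zsmul.1 h
  rw [zsmul_eq_mul] at *
  have hm₁ : ((-1 : ℤ) : ℝ) < m := by
    push_cast; exact (mul_lt_mul_iff_left₀ hc).1 (by linarith)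
  have hm₂ : (m : ℝ) < (2 : ℤ) := by
    push_cast; exact (mul_lt_mul_iff_left₀ hc).1 (by linarith)
  obtain rfl | rfl : m = 0 ∨ m = 1 := by
    have := Int.cast_lt.1 hm₁; have := Int.cast_lt.1 hm₂; omega
  · simp
  · simp

lemma disjoint_periodicAbove_periodicBelow (hc : 0 < c) {θ₀ : ℝ}
    (hgap : ∀ s ∈ Ioo 0 c, f s < f (s + c)) :
    Disjoint (periodicAbove c f (Ioo θ₀ (2 * c))) (periodicBelow c f (Ioo 0 (θ₀ + c))) := by
  refine disjoint_left.2 fun p ⟨s, hs, hsI, hfs⟩ ⟨s', hs', hs'I, hfs'⟩ => ?_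
  rcases (hs'.trans hs.symm).eq_or_eq_add_of_sub_lt_of_lt hc
    (by linarith [hsI.1, hs'I.2]) (by linarith [hsI.2, hs'I.1]) with rfl | rfl
  · linarith
  · linarith [hgap s' ⟨hs'I.1, by linarith [hsI.2]⟩]

lemma modEq_of_notMem_periodicAbove_of_notMem_periodicBelow (hc : 0 < c) {θ₀ : ℝ}
    (hθ₀ : θ₀ ∈ Ioo 0 c) {p : ℝ × ℝ} (hU : p ∉ periodicAbove c f (Ioo θ₀ (2 * c)))
    (hV : p ∉ periodicBelow c f (Ioo 0 (θ₀ + c)))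
    (hp : ∀ s ∈ Ioo 0 (2 * c), s ≡ p.1 [PMOD c] → p.2 ≠ f s) :
    θ₀ ≡ p.1 [PMOD c] ∧ f θ₀ < p.2 ∧ p.2 < f (θ₀ + c) := by
  obtain ⟨hθ₀₁, hθ₀₂⟩ := hθ₀
  set r := toIcoMod hc 0 p.1
  obtain ⟨hr₀, hrc⟩ : r ∈ Ico 0 c := toIcoMod_mem_Ico' hc p.1
  have hr : r ≡ p.1 [PMOD c] :=
    modEq_iff_eq_add_zsmul.2 ⟨_, (toIcoMod_add_toIcoDiv_zsmul hc 0 p.1).symm⟩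
  have hrc' : r + c ≡ p.1 [PMOD c] := (add_modEq_left.2 self_modEq_zero).trans hr
  rcases hr₀.eq_or_lt with hr₀ | hr₀
  · have hc' : c ≡ p.1 [PMOD c] := by simpa [← hr₀] using hrc'
    rcases (hp c ⟨hc, by linarith⟩ hc').lt_or_gt with h | h
    · exact absurd ⟨c, hc', ⟨by linarith, by linarith⟩, h⟩ hV
    · exact absurd ⟨c, hc', ⟨hθ₀₂, by linarith⟩, h⟩ hU
  have hlo : f r < p.2 := by
    refine lt_of_le_of_ne (not_lt.1 fun h => hV ⟨r, hr, ⟨hr₀, by linarith⟩, h⟩) ?_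
    exact (hp r ⟨hr₀, by linarith⟩ hr).symm
  have hhi : p.2 < f (r + c) := by
    refine lt_of_le_of_ne (not_lt.1 fun h => hU ⟨r + c, hrc', ⟨by linarith, by linarith⟩, h⟩) ?_
    exact hp (r + c) ⟨by linarith, by linarith⟩ hrc'
  rcases lt_trichotomy r θ₀ with h | rfl | h
  · exact absurd ⟨r + c, hrc', ⟨by linarith, by linarith⟩, hhi⟩ hV
  · exact ⟨hr, hlo, hhi⟩
  · exact absurd ⟨r, hr, ⟨h, by linarith⟩, hlo⟩ hU

end PeriodicGraph

/-- By the intermediate value theorem the gap `f (s + c) - f s` has constant sign. -/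
lemma lt_add_period_of_ne {f : ℝ → ℝ} {c : ℝ} (hf : ContinuousOn f (Icc 0 (2 * c)))
    (hne : ∀ s ∈ Icc 0 c, f s ≠ f (s + c)) (h : f 0 < f (2 * c)) :
    ∀ s ∈ Icc 0 c, f s < f (s + c) := by
  intro s hs
  by_contra! hle
  have hc : 0 ≤ c := hs.1.trans hs.2
  have hg : ContinuousOn (fun s => f (s + c) - f s) (Icc 0 c) :=
    (hf.comp (by fun_prop) fun x hx => ⟨by linarith [hx.1], by linarith [hx.2]⟩).sub
      (hf.mono (Icc_subset_Icc le_rfl (by linarith)))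
  have hpos : ∃ a ∈ Icc 0 c, 0 < f (a + c) - f a := by
    by_contra! hnpos
    have h₀ := hnpos 0 ⟨le_rfl, hc⟩
    have h₁ := hnpos c ⟨hc, le_rfl⟩
    rw [zero_add, ← two_mul] at *
    linarith
  obtain ⟨a, ha, hpos⟩ := hpos
  obtain ⟨t, ht, h0⟩ := isPreconnected_Icc.intermediate_value hs ha hg ⟨by linarith, hpos.le⟩
  exact hne t ht (sub_eq_zero.1 h0).symm

lemma HasDerivAt.eventually_gt_nhdsGT {g : ℝ → ℝ} {g' x : ℝ} (hg : HasDerivAt g g' x)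
    (hg' : 0 < g') : ∀ᶠ t in 𝓝[>] x, g x < g t := by
  have hslope : ∀ᶠ t in 𝓝[>] x, 0 < slope g x t :=
    ((hasDerivAt_iff_tendsto_slope.1 hg).mono_left (nhdsGT_le_nhdsNE x)).eventually
      (eventually_gt_nhds hg')
  filter_upwards [hslope, self_mem_nhdsWithin] with t hpos (ht : x < t)
  rw [slope_def_field] at hpos
  linarith [(div_pos_iff_of_pos_right (sub_pos.2 ht)).1 hpos]

lemma eventually_mem_periodicAbove {c θ₀ τ x' : ℝ} {f x y : ℝ → ℝ} {I : Set ℝ}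
    (hI : I ∈ 𝓝[>] θ₀) (hf : ContinuousWithinAt f (Ioi θ₀) θ₀) (hx : HasDerivAt x x' τ)
    (hx' : 0 < x') (hy : ContinuousAt y τ) (hmod : θ₀ ≡ x τ [PMOD c]) (hlt : f θ₀ < y τ) :
    ∀ᶠ t in 𝓝[>] τ, (x t, y t) ∈ periodicAbove c f I := by
  obtain ⟨m, hm⟩ := modEq_iff_eq_add_zsmul.1 hmod
  have hs : Tendsto (fun t => x t - m • c) (𝓝[>] τ) (𝓝[>] θ₀) := by
    refine tendsto_nhdsWithin_iff.2 ⟨?_, (hx.eventually_gt_nhdsGT hx').mono fun t ht => ?_⟩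
    · have := (hx.continuousAt.tendsto.sub_const (m • c)).mono_left
        (nhdsWithin_le_nhds (s := Ioi τ))
      rwa [hm, add_sub_cancel_right] at this
    · rw [mem_Ioi]; linarith
  filter_upwards [hs.eventually hI, (hf.tendsto.comp hs).eventually_lt
    (hy.tendsto.mono_left nhdsWithin_le_nhds) hlt] with t hsI hfs
  exact ⟨_, modEq_iff_eq_add_zsmul.2 ⟨m, (sub_add_cancel _ _).symm⟩, hsI, hfs⟩

lemma exists_last_exit {X : Type*} [TopologicalSpace X] {γ : ℝ → X} {U V : Set X} {t₁ t₂ : ℝ}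
    (ht : t₁ ≤ t₂) (hγ : ContinuousOn γ (Icc t₁ t₂)) (hU : IsOpen U) (hV : IsOpen V)
    (hUV : Disjoint U V) (h₁ : γ t₁ ∈ U) (h₂ : γ t₂ ∈ V) :
    ∃ τ ∈ Ioo t₁ t₂, γ τ ∉ U ∧ γ τ ∉ V ∧ ∀ t ∈ Ioc τ t₂, γ t ∉ U := by
  set S := {t ∈ Icc t₁ t₂ | γ t ∈ U}
  have hS : S.Nonempty := ⟨t₁, ⟨le_rfl, ht⟩, h₁⟩
  have hSbdd : BddAbove S := ⟨t₂, fun t ht => ht.1.2⟩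
  set τ := sSup S
  have hτ₁ : t₁ ≤ τ := le_csSup hSbdd ⟨⟨le_rfl, ht⟩, h₁⟩
  have hτ₂ : τ ≤ t₂ := csSup_le hS fun t ht => ht.1.2
  have hafter : ∀ t ∈ Ioc τ t₂, γ t ∉ U := fun t ht htU =>
    ht.1.not_ge (le_csSup hSbdd ⟨⟨hτ₁.trans ht.1.le, ht.2⟩, htU⟩)
  have hnear : ∀ W, IsOpen W → γ τ ∈ W → ∀ᶠ t in 𝓝 τ, t ∈ Icc t₁ t₂ → γ t ∈ W := fun W hW hτW =>
    eventually_nhdsWithin_iff.1 ((hγ τ ⟨hτ₁, hτ₂⟩).eventually (hW.mem_nhds hτW))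
  have hτU : γ τ ∉ U := by
    intro hτU
    have hτt₂ : τ < t₂ := hτ₂.lt_of_ne fun h => disjoint_left.1 hUV (h ▸ hτU) h₂
    obtain ⟨t, htτ, htt₂, htU⟩ := ((frequently_gt_nhds τ).and_eventually
      ((eventually_lt_nhds hτt₂).and (hnear U hU hτU))).exists
    exact hafter t ⟨htτ, htt₂.le⟩ (htU ⟨hτ₁.trans htτ.le, htt₂.le⟩)
  have hτV : γ τ ∉ V := by
    intro hτV
    obtain ⟨t, ⟨htI, htU⟩, htV⟩ :=
      ((isLUB_csSup hS hSbdd).frequently_nhds_mem hS).and_eventually (hnear V hV hτV) |>.exists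
    exact disjoint_left.1 hUV htU (htV htI)
  exact ⟨τ, ⟨hτ₁.lt_of_ne fun h => hτU (h ▸ h₁), hτ₂.lt_of_ne fun h => hτV (h ▸ h₂)⟩,
    hτU, hτV, hafter⟩

theorem exists_crossing {c θ₀ t₁ t₂ : ℝ} {f x y x' : ℝ → ℝ} (hc : 0 < c) (hθ₀ : θ₀ ∈ Ioo 0 c)
    (hf : ContinuousOn f (Icc 0 (2 * c))) (hgap : ∀ s ∈ Icc 0 c, f s < f (s + c))
    (ht : t₁ ≤ t₂) (hx : ∀ t ∈ Icc t₁ t₂, HasDerivWithinAt x (x' t) (Icc t₁ t₂) t)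
    (hy : ContinuousOn y (Icc t₁ t₂)) (hx₁ : 2 * c ≡ x t₁ [PMOD c]) (hy₁ : y t₁ = f (2 * c))
    (hx₂ : 0 ≡ x t₂ [PMOD c]) (hy₂ : y t₂ = f 0)
    (havoid : ∀ t ∈ Ioo t₁ t₂, ∀ s ∈ Ioo 0 (2 * c), s ≡ x t [PMOD c] → y t ≠ f s) :
    ∃ t ∈ Ioo t₁ t₂, θ₀ ≡ x t [PMOD c] ∧ f θ₀ < y t ∧ y t < f (θ₀ + c) ∧ x' t ≤ 0 := by
  obtain ⟨hθ₀₁, hθ₀₂⟩ := hθ₀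
  set U := periodicAbove c f (Ioo θ₀ (2 * c))
  set V := periodicBelow c f (Ioo 0 (θ₀ + c))
  have hU : IsOpen U := isOpen_periodicAbove isOpen_Ioo
    (hf.mono (Ioo_subset_Icc_self.trans (Icc_subset_Icc hθ₀₁.le le_rfl)))
  have hV : IsOpen V := isOpen_periodicBelow isOpen_Ioo
    (hf.mono (Ioo_subset_Icc_self.trans (Icc_subset_Icc le_rfl (by linarith))))
  have hUV : Disjoint U V :=
    disjoint_periodicAbove_periodicBelow hc fun s hs => hgap s (Ioo_subset_Icc_self hs)
  have hc₁ : c ≡ x t₁ [PMOD c] :=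
    (modEq_iff_eq_add_zsmul.2 ⟨1, by rw [one_zsmul, two_mul]⟩).trans hx₁
  have h₁ : (x t₁, y t₁) ∈ U :=
    ⟨c, hc₁, ⟨hθ₀₂, by linarith⟩, by simpa [hy₁, two_mul] using hgap c ⟨hc.le, le_rfl⟩⟩
  have h₂ : (x t₂, y t₂) ∈ V :=
    ⟨c, self_modEq_zero.trans hx₂, ⟨hc, by linarith⟩, by simpa [hy₂] using hgap 0 ⟨le_rfl, hc.le⟩⟩
  have hγ : ContinuousOn (fun t => (x t, y t)) (Icc t₁ t₂) :=
    ContinuousOn.prodMk (fun t ht => (hx t ht).continuousWithinAt) hy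
  obtain ⟨τ, hτ, hτU, hτV, hafter⟩ := exists_last_exit ht hγ hU hV hUV h₁ h₂
  obtain ⟨hmod, hlo, hhi⟩ := modEq_of_notMem_periodicAbove_of_notMem_periodicBelow hc
    ⟨hθ₀₁, hθ₀₂⟩ hτU hτV (havoid τ hτ)
  refine ⟨τ, hτ, hmod, hlo, hhi, not_lt.1 fun hpos => ?_⟩
  have hτI : Icc t₁ t₂ ∈ 𝓝 τ := Icc_mem_nhds hτ.1 hτ.2
  have hfθ₀ : ContinuousWithinAt f (Ioi θ₀) θ₀ :=
    (hf.continuousAt (Icc_mem_nhds hθ₀₁ (by linarith))).continuousWithinAt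
  have hI : Ioo θ₀ (2 * c) ∈ 𝓝[>] θ₀ := Ioo_mem_nhdsGT (by linarith)
  obtain ⟨t, htU, htτ⟩ := ((eventually_mem_periodicAbove hI hfθ₀
    ((hx τ (mem_of_mem_nhds hτI)).hasDerivAt hτI) hpos (hy.continuousAt hτI) hmod hlo).and
    (Ioc_mem_nhdsGT hτ.2)).exists
  exact hafter t htτ htU

lemma LipschitzWith.volume_image_le {g : ℝ → ℝ} (hg : LipschitzWith 1 g) (s : Set ℝ) :
    volume (g '' s) ≤ volume s := by
  simpa [hausdorffMeasure_real] using hg.hausdorffMeasure_image_le zero_le_one s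

/-- The pieces of `A` that `φ` maps into the translates `(kc, kc + c)` are disjoint, and their
images, shifted back by `kc`, cover `(0, c)`. -/
lemma ofReal_le_volume_of_forall_modEq {c : ℝ} {A : Set ℝ} {φ : ℝ → ℝ}
    (hA : MeasurableSet A) (hφ : LipschitzOnWith 1 φ A)
    (hcover : ∀ x ∈ Ioo 0 c, ∃ t ∈ A, x ≡ φ t [PMOD c]) :
    ENNReal.ofReal c ≤ volume A := by
  rcases le_or_gt c 0 with hc | hc
  · simp [ENNReal.ofReal_eq_zero.2 hc]
  obtain ⟨g, hg, hφg⟩ := hφ.extend_real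
  set piece : ℤ → Set ℝ := fun k => A ∩ g ⁻¹' Ioo (k • c) (k • c + c)
  have hpiece : ∀ k t, t ∈ piece k → toIcoDiv hc 0 (g t) = k := fun k t ht =>
    toIcoDiv_eq_of_sub_zsmul_mem_Ico hc ⟨by linarith [ht.2.1], by linarith [ht.2.2]⟩
  have hdisj : Pairwise (Function.onFun Disjoint piece) := fun k j hkj =>
    disjoint_left.2 fun t htk htj => hkj ((hpiece k t htk).symm.trans (hpiece j t htj))
  have hmeas : ∀ k, MeasurableSet (piece k) := fun k =>
    hA.inter (hg.continuous.measurable measurableSet_Ioo)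
  have hshift : ∀ k : ℤ, LipschitzWith 1 (fun t => g t - k • c) := fun k =>
    LipschitzWith.of_dist_le_mul fun t u => by simpa [dist_sub_right] using hg.dist_le_mul t u
  have hsub : Ioo 0 c ⊆ ⋃ k : ℤ, (fun t => g t - k • c) '' piece k := by
    intro x hx
    obtain ⟨t, htA, hmod⟩ := hcover x hx
    obtain ⟨m, hm⟩ := modEq_iff_eq_add_zsmul.1 hmod
    rw [hφg htA] at hm
    refine mem_iUnion.2 ⟨m, t, ⟨htA, ?_⟩, by simp [hm]⟩
    rw [mem_preimage, hm]
    constructor <;> linarith [hx.1, hx.2]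
  calc ENNReal.ofReal c = volume (Ioo 0 c) := by simp
    _ ≤ volume (⋃ k : ℤ, (fun t => g t - k • c) '' piece k) := measure_mono hsub
    _ ≤ ∑' k : ℤ, volume ((fun t => g t - k • c) '' piece k) := measure_iUnion_le _
    _ ≤ ∑' k : ℤ, volume (piece k) :=
      ENNReal.tsum_le_tsum fun k => (hshift k).volume_image_le _
    _ = volume (⋃ k, piece k) := (measure_iUnion hdisj hmeas).symm
    _ ≤ volume A := measure_mono (iUnion_subset fun _ => inter_subset_left)

lemma abs_le_abs_add_mul_of_hasDerivWithinAt {f f' : ℝ → ℝ} {a M : ℝ}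
    (hf : ∀ x ∈ Icc 0 a, HasDerivWithinAt f (f' x) (Icc 0 a) x)
    (hf' : ∀ x ∈ Icc 0 a, |f' x| ≤ M) {x : ℝ} (hx : x ∈ Icc 0 a) :
    |f x| ≤ |f 0| + M * a := by
  have ha : 0 ≤ a := hx.1.trans hx.2
  have hM : 0 ≤ M := (abs_nonneg _).trans (hf' 0 ⟨le_rfl, ha⟩)
  have hmvt := (convex_Icc 0 a).norm_image_sub_le_of_norm_hasDerivWithin_le hf hf'
    ⟨le_rfl, ha⟩ hx
  rw [Real.norm_eq_abs, Real.norm_eq_abs, sub_zero, abs_of_nonneg hx.1] at hmvt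
  calc |f x| ≤ |f 0| + |f x - f 0| := by simpa using abs_add_le (f 0) (f x - f 0)
    _ ≤ |f 0| + M * a := by nlinarith [hx.2]

open Real in
lemma Real.cos_eq_and_sin_eq_of_modEq {s θ : ℝ} (h : s ≡ θ [PMOD 2 * π]) :
    cos θ = cos s ∧ sin θ = sin s := by
  obtain ⟨m, rfl⟩ := modEq_iff_eq_add_zsmul.1 h
  rw [zsmul_eq_mul]
  exact ⟨cos_add_int_mul_two_pi s m, sin_add_int_mul_two_pi s m⟩

open Real in
lemma Real.modEq_of_cos_eq_of_sin_eq {θ ψ : ℝ} (hcos : cos θ = cos ψ) (hsin : sin θ = sin ψ) :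
    ψ ≡ θ [PMOD 2 * π] := by
  obtain ⟨k, hk⟩ := Real.Angle.angle_eq_iff_two_pi_dvd_sub.1 (Real.Angle.cos_sin_inj hcos hsin)
  exact modEq_iff_eq_add_zsmul.2 ⟨k, by rw [zsmul_eq_mul]; linarith⟩

lemma measurableSet_Ioo_inter_preimage {X : Type*} [TopologicalSpace X] {f : ℝ → X} {a b : ℝ}
    {F : Set X} (hf : ContinuousOn f (Icc a b)) (hF : IsClosed F) :
    MeasurableSet (Ioo a b ∩ f ⁻¹' F) := by
  rw [← inter_eq_left.2 Ioo_subset_Icc_self, inter_assoc]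
  exact measurableSet_Ioo.inter (hf.preimage_isClosed_of_isClosed isClosed_Icc hF).measurableSet

lemma lipschitzOnWith_one_of_sq_add_sq_eq_one {f f' g' : ℝ → ℝ} {s : Set ℝ} (hs : Convex ℝ s)
    (hf : ∀ t ∈ s, HasDerivWithinAt f (f' t) s t) (hunit : ∀ t ∈ s, f' t ^ 2 + g' t ^ 2 = 1) :
    LipschitzOnWith 1 f s :=
  hs.lipschitzOnWith_of_nnnorm_hasDerivWithin_le hf fun t ht => by
    have : |f' t| ≤ 1 := (sq_le_one_iff_abs_le_one _).1 (by nlinarith [hunit t ht])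
    rw [← NNReal.coe_le_coe]
    simpa using this

open Real in
lemma lt_add_two_pi_of_injOn {z : ℝ → ℝ} (hz : ContinuousOn z (Icc 0 (4 * π)))
    (hinj : InjOn (fun θ => (cos θ, sin θ, z θ)) (Icc 0 (4 * π))) (h : z 0 < z (4 * π)) :
    ∀ s ∈ Icc 0 (2 * π), z s < z (s + 2 * π) := by
  have h4π : 4 * π = 2 * (2 * π) := by ring
  refine lt_add_period_of_ne (h4π ▸ hz) (fun s hs heq => ?_) (h4π ▸ h)
  have := hinj (x₁ := s) (x₂ := s + 2 * π) ⟨hs.1, by linarith [hs.2, pi_pos]⟩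
    ⟨by linarith [hs.1, pi_pos], by linarith [hs.2]⟩ (by simp [heq])
  linarith [pi_pos]

theorem forced_crossing_general (b : ℝ)
    (z z' : ℝ → ℝ)
    (hz : ∀ θ ∈ Set.Icc 0 (4 * Real.pi),
      HasDerivWithinAt z (z' θ) (Set.Icc 0 (4 * Real.pi)) θ)
    (hz0 : |z 0| ≤ b / 2)
    (hz'bd : ∀ θ ∈ Set.Icc 0 (4 * Real.pi), |z' θ| ≤ b / (8 * Real.pi))
    (hinj : Set.InjOn (fun θ => (Real.cos θ, Real.sin θ, z θ)) (Set.Icc 0 (4 * Real.pi)))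
    (hz04 : z 0 < z (4 * Real.pi))
    (t₁ t₂ : ℝ) (ht : t₁ < t₂)
    (θt zt θt' zt' : ℝ → ℝ)
    (hθt : ∀ t ∈ Set.Icc t₁ t₂, HasDerivWithinAt θt (θt' t) (Set.Icc t₁ t₂) t)
    (hzt : ∀ t ∈ Set.Icc t₁ t₂, HasDerivWithinAt zt (zt' t) (Set.Icc t₁ t₂) t)
    (hθt'cont : ContinuousOn θt' (Set.Icc t₁ t₂))
    (harclength : ∀ t ∈ Set.Icc t₁ t₂, (θt' t) ^ 2 + (zt' t) ^ 2 = 1)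
    (hstart : (Real.cos (θt t₁), Real.sin (θt t₁), zt t₁)
      = (Real.cos (4 * Real.pi), Real.sin (4 * Real.pi), z (4 * Real.pi)))
    (hend : (Real.cos (θt t₂), Real.sin (θt t₂), zt t₂) = (Real.cos 0, Real.sin 0, z 0))
    (hdisjoint : ∀ t ∈ Set.Ioo t₁ t₂, ∀ θ ∈ Set.Ioo 0 (4 * Real.pi),
      (Real.cos (θt t), Real.sin (θt t), zt t) ≠ (Real.cos θ, Real.sin θ, z θ)) :
    (∀ θ₀ ∈ Set.Ioo 0 (2 * Real.pi), ∃ t ∈ Set.Ioo t₁ t₂,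
      (∃ k : ℤ, θt t - θ₀ = 2 * Real.pi * k) ∧
      -b ≤ z θ₀ ∧ z θ₀ ≤ zt t ∧ zt t ≤ z (θ₀ + 2 * Real.pi) ∧
      z (θ₀ + 2 * Real.pi) ≤ b ∧ θt' t ≤ 0) ∧
    ENNReal.ofReal (2 * Real.pi)
      ≤ volume {t | t ∈ Set.Ioo t₁ t₂ ∧ |zt t| ≤ b ∧ θt' t ≤ 0} := by
  have h4π : 4 * Real.pi = 2 * (2 * Real.pi) := by ring
  have hzc : ContinuousOn z (Icc 0 (4 * Real.pi)) := fun θ hθ => (hz θ hθ).continuousWithinAt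
  have hzb : ∀ θ ∈ Icc 0 (4 * Real.pi), |z θ| ≤ b := fun θ hθ => by
    have hmvt := abs_le_abs_add_mul_of_hasDerivWithinAt hz hz'bd hθ
    have hb2 : b / (8 * Real.pi) * (4 * Real.pi) = b / 2 := by field_simp; ring
    linarith
  simp only [Prod.mk.injEq] at hstart hend
  have hpart : ∀ θ₀ ∈ Ioo 0 (2 * Real.pi), ∃ t ∈ Ioo t₁ t₂,
      (∃ k : ℤ, θt t - θ₀ = 2 * Real.pi * k) ∧
      -b ≤ z θ₀ ∧ z θ₀ ≤ zt t ∧ zt t ≤ z (θ₀ + 2 * Real.pi) ∧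
      z (θ₀ + 2 * Real.pi) ≤ b ∧ θt' t ≤ 0 := fun θ₀ hθ₀ => by
    obtain ⟨t, ht, hmod, hlo, hhi, hderiv⟩ := exists_crossing Real.two_pi_pos hθ₀ (h4π ▸ hzc)
      (lt_add_two_pi_of_injOn hzc hinj hz04) ht.le hθt
      (fun t ht => (hzt t ht).continuousWithinAt)
      (h4π ▸ Real.modEq_of_cos_eq_of_sin_eq hstart.1 hstart.2.1) (h4π ▸ hstart.2.2)
      (Real.modEq_of_cos_eq_of_sin_eq hend.1 hend.2.1) hend.2.2
      fun t ht s hs hmod heq => hdisjoint t ht s (h4π ▸ hs) (by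
        simp only [Real.cos_eq_and_sin_eq_of_modEq hmod, heq])
    obtain ⟨m, hm⟩ := modEq_iff_eq_add_zsmul.1 hmod
    have := Real.pi_pos
    exact ⟨t, ht, ⟨m, by rw [hm, zsmul_eq_mul]; ring⟩,
      (abs_le.1 (hzb θ₀ ⟨hθ₀.1.le, by linarith [hθ₀.2]⟩)).1, hlo.le, hhi.le,
      (abs_le.1 (hzb _ ⟨by linarith [hθ₀.1], by linarith [hθ₀.2]⟩)).2, hderiv⟩
  refine ⟨hpart, ofReal_le_volume_of_forall_modEq
    (measurableSet_Ioo_inter_preimage (F := {p : ℝ × ℝ | |p.1| ≤ b ∧ p.2 ≤ 0})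
      (ContinuousOn.prodMk (fun t ht => (hzt t ht).continuousWithinAt) hθt'cont)
      ((isClosed_le (continuous_abs.comp continuous_fst) continuous_const).inter
        (isClosed_le continuous_snd continuous_const)))
    ((lipschitzOnWith_one_of_sq_add_sq_eq_one (convex_Icc t₁ t₂) hθt harclength).mono
      fun t ht => Ioo_subset_Icc_self ht.1) fun x hx => ?_⟩
  obtain ⟨t, ht, ⟨k, hk⟩, hlo, hzlo, hzhi, hhi, hderiv⟩ := hpart x hx
  exact ⟨t, ⟨ht, abs_le.2 ⟨by linarith, by linarith⟩, hderiv⟩,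
    modEq_iff_eq_add_zsmul.2 ⟨k, by rw [zsmul_eq_mul]; linarith⟩⟩

/-- topological forced-crossing lemma on the cylinder. A double loop
`ω(θ) = (cos θ, sin θ, z(θ))`, `θ ∈ [0,4π]`, winding twice inside the band `|z| ≤ b`, is
joined from its endpoint back to its starting point by an arc-length curve
`ω̃(t) = (cos θ̃(t), sin θ̃(t), z̃(t))` avoiding the loop; then `ω̃` must cross every vertical
segment of the band with nonpositive angular speed, and the set of such times has measure
at least `2π`. -/
theorem forced_crossing (b : ℝ) (hb : b ∈ Set.Ioo (0:ℝ) (1/100))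
    (z z' : ℝ → ℝ)
    (hz : ∀ θ ∈ Set.Icc 0 (4 * Real.pi),
      HasDerivWithinAt z (z' θ) (Set.Icc 0 (4 * Real.pi)) θ)
    (hz'cont : ContinuousOn z' (Set.Icc 0 (4 * Real.pi)))
    (hzrange : ∀ θ ∈ Set.Icc 0 (4 * Real.pi), z θ ∈ Set.Ioo (-1:ℝ) 1)
    (hz0 : |z 0| ≤ b / 2)
    (hz'bd : ∀ θ ∈ Set.Icc 0 (4 * Real.pi), |z' θ| ≤ b / (8 * Real.pi))
    (hinj : Set.InjOn (fun θ => (Real.cos θ, Real.sin θ, z θ)) (Set.Icc 0 (4 * Real.pi)))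
    (hz04 : z 0 < z (4 * Real.pi))
    (t₁ t₂ : ℝ) (ht : t₁ < t₂)
    (θt zt θt' zt' : ℝ → ℝ)
    (hθt : ∀ t ∈ Set.Icc t₁ t₂, HasDerivWithinAt θt (θt' t) (Set.Icc t₁ t₂) t)
    (hzt : ∀ t ∈ Set.Icc t₁ t₂, HasDerivWithinAt zt (zt' t) (Set.Icc t₁ t₂) t)
    (hθt'cont : ContinuousOn θt' (Set.Icc t₁ t₂))
    (hzt'cont : ContinuousOn zt' (Set.Icc t₁ t₂))
    (hztrange : ∀ t ∈ Set.Icc t₁ t₂, zt t ∈ Set.Ioo (-1:ℝ) 1)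
    (harclength : ∀ t ∈ Set.Icc t₁ t₂, (θt' t) ^ 2 + (zt' t) ^ 2 = 1)
    (hstart : (Real.cos (θt t₁), Real.sin (θt t₁), zt t₁)
      = (Real.cos (4 * Real.pi), Real.sin (4 * Real.pi), z (4 * Real.pi)))
    (hend : (Real.cos (θt t₂), Real.sin (θt t₂), zt t₂) = (Real.cos 0, Real.sin 0, z 0))
    (hdisjoint : ∀ t ∈ Set.Ioo t₁ t₂, ∀ θ ∈ Set.Ioo 0 (4 * Real.pi),
      (Real.cos (θt t), Real.sin (θt t), zt t) ≠ (Real.cos θ, Real.sin θ, z θ)) :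
    (∀ θ₀ ∈ Set.Ioo 0 (2 * Real.pi), ∃ t ∈ Set.Ioo t₁ t₂,
      (∃ k : ℤ, θt t - θ₀ = 2 * Real.pi * k) ∧
      -b ≤ z θ₀ ∧ z θ₀ ≤ zt t ∧ zt t ≤ z (θ₀ + 2 * Real.pi) ∧
      z (θ₀ + 2 * Real.pi) ≤ b ∧ θt' t ≤ 0) ∧
    ENNReal.ofReal (2 * Real.pi)
      ≤ volume {t | t ∈ Set.Ioo t₁ t₂ ∧ |zt t| ≤ b ∧ θt' t ≤ 0} :=
  forced_crossing_general b z z' hz hz0 hz'bd hinj hz04 t₁ t₂ ht θt zt θt' zt' hθt hzt hθt'cont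
    harclength hstart hend hdisjoint
end
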